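/- Let G = (V,E,c) be an edge-weighted directed graph without negative-weight closed walks, let d_{ij} be the minimum walk weight from i to j, and let R be a redundant edge set of G. If (i,j) ∈ E satisfies c_{ij} > d_{ij}, then R ∪ {(i,j)} is also a redundant edge set of G. -/

import Mathlib

/-!
Say that `F` replaces `E` when every edge `(a, b)` of `E` is matched by an `a`–`b` walk in `F` of
weight at most `c a b`; then every walk in `E` is matched by a walk in `F` with the same ends and
no greater weight, and replacements compose. As no closed walk is negative, loops can be cut out
of walks, so replacement walks may be shortened to paths, and an `i`–`j` walk passing through the
edge `(i, j)` weighs at least `c i j`. A minimum `i`–`j` walk, moved into `E \ R`, therefore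
weighs at most `dij < c i j` and avoids `(i, j)`: it replaces `(i, j)` in `E \ (R ∪ {(i, j)})`,
and composing with the replacement of `E` by `E \ R` gives the claim.
-/

/-- `l` is a walk in edge set `E`: a nonempty list of vertices with consecutive edges. -/
def IsWalk {V : Type*} (E : Set (V × V)) (l : List V) : Prop :=
  l ≠ [] ∧ l.Chain' (fun a b => (a, b) ∈ E)

/-- The weight of a walk: sum of edge weights along consecutive pairs (with multiplicity). -/
def walkWeight {V : Type*} (c : V → V → ℝ) (l : List V) : ℝ :=
  ((l.zip l.tail).map fun p => c p.1 p.2).sum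

/-- `l` is a walk from `u` to `v`. -/
def IsWalkFrom {V : Type*} (E : Set (V × V)) (u v : V) (l : List V) : Prop :=
  IsWalk E l ∧ l.head? = some u ∧ l.getLast? = some v

/-- A closed walk: a walk with at least one edge whose first and last vertices agree. -/
def IsClosedWalk {V : Type*} (E : Set (V × V)) (l : List V) : Prop :=
  IsWalk E l ∧ 2 ≤ l.length ∧ l.head? = l.getLast?

/-- A simple path from `u` to `v`: a walk with all traversed vertices distinct. -/
def IsPathFrom {V : Type*} (E : Set (V × V)) (u v : V) (l : List V) : Prop :=
  IsWalkFrom E u v l ∧ l.Nodup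

/-- A cycle: a closed walk all of whose vertices other than the repeated endpoint are distinct. -/
def IsCycle {V : Type*} (E : Set (V × V)) (l : List V) : Prop :=
  IsClosedWalk E l ∧ l.tail.Nodup

/-- `x` satisfies the precedence relation system of `(V, E, c)`. -/
def Satisfies {V : Type*} (E : Set (V × V)) (c : V → V → ℝ) (x : V → ℝ) : Prop :=
  ∀ e ∈ E, x e.1 - x e.2 ≤ c e.1 e.2

/-- `R` is a redundant edge set of `(V, E, c)`: every edge of `R` has a replacement path
in the reduced graph of no greater weight. -/
def IsRedundantEdgeSet {V : Type*} (E : Set (V × V)) (c : V → V → ℝ)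
    (R : Set (V × V)) : Prop :=
  R ⊆ E ∧ ∀ e ∈ R, ∃ l, IsPathFrom (E \ R) e.1 e.2 l ∧ walkWeight c l ≤ c e.1 e.2

/-- `w` is the minimum weight of a walk from `i` to `j` in `(V, E, c)` (attained). -/
def IsMinWalkWeight {V : Type*} (E : Set (V × V)) (c : V → V → ℝ) (i j : V) (w : ℝ) : Prop :=
  (∃ l, IsWalkFrom E i j l ∧ walkWeight c l = w) ∧
  ∀ l, IsWalkFrom E i j l → w ≤ walkWeight c l

/-- The relation `∼`: `i ∼ j` iff `i = j` or some zero-weight closed walk traverses both. -/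
def Sim {V : Type*} (E : Set (V × V)) (c : V → V → ℝ) (i j : V) : Prop :=
  i = j ∨ ∃ l, IsClosedWalk E l ∧ walkWeight c l = 0 ∧ i ∈ l ∧ j ∈ l

lemma List.exists_eq_append_cons_append_cons_of_not_nodup {α : Type*} {l : List α}
    (h : ¬ l.Nodup) : ∃ l₁ x l₂ l₃, l = l₁ ++ x :: (l₂ ++ x :: l₃) := by
  obtain ⟨x, hx⟩ : ∃ x, List.Sublist [x, x] l := by simpa [List.nodup_iff_sublist] using h
  obtain ⟨r₁, r₂, rfl, h₁, h₂⟩ := List.cons_sublist_iff.1 hx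
  obtain ⟨s, t, rfl⟩ := List.append_of_mem h₁
  obtain ⟨s', t', rfl⟩ := List.append_of_mem (List.singleton_sublist.1 h₂)
  exact ⟨s, x, t ++ s', t', by simp⟩

section Walks

variable {V : Type*} {E F : Set (V × V)} {c : V → V → ℝ} {u v w x : V} {l : List V}

@[simp]
lemma walkWeight_singleton (c : V → V → ℝ) (a : V) : walkWeight c [a] = 0 := by
  simp [walkWeight]

@[simp]
lemma walkWeight_cons_cons (c : V → V → ℝ) (a b : V) (l : List V) :
    walkWeight c (a :: b :: l) = c a b + walkWeight c (b :: l) := by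
  simp [walkWeight]

lemma walkWeight_append_cons (c : V → V → ℝ) (l₁ l₂ : List V) (x : V) :
    walkWeight c (l₁ ++ x :: l₂) = walkWeight c (l₁ ++ [x]) + walkWeight c (x :: l₂) := by
  induction l₁ with
  | nil => simp
  | cons a l ih => cases l <;> simp_all [add_assoc]

lemma isWalk_iff : IsWalk E l ↔ l ≠ [] ∧ l.IsChain (fun a b => (a, b) ∈ E) := Iff.rfl

lemma isWalkFrom_append_cons_iff {l₁ l₂ : List V} :
    IsWalkFrom E u w (l₁ ++ x :: l₂) ↔
      IsWalkFrom E u x (l₁ ++ [x]) ∧ IsWalkFrom E x w (x :: l₂) := by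
  simp only [IsWalkFrom, isWalk_iff]
  rw [List.isChain_split]
  simp [List.getLast?_append, List.head?_append]
  tauto

lemma isWalkFrom_singleton_iff {a : V} : IsWalkFrom E u v [a] ↔ a = u ∧ a = v := by
  simp [IsWalkFrom, isWalk_iff]

lemma isWalkFrom_cons_cons_iff {a b : V} :
    IsWalkFrom E u v (a :: b :: l) ↔ a = u ∧ (a, b) ∈ E ∧ IsWalkFrom E b v (b :: l) := by
  rw [← List.singleton_append, isWalkFrom_append_cons_iff]
  simp [IsWalkFrom, isWalk_iff]
  tauto

lemma isWalkFrom_pair_iff : IsWalkFrom E u v [u, v] ↔ (u, v) ∈ E := by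
  simp [isWalkFrom_cons_cons_iff, isWalkFrom_singleton_iff]

lemma IsWalk.mono (h : IsWalk E l) (hEF : E ⊆ F) : IsWalk F l :=
  ⟨h.1, List.IsChain.imp (fun _ _ hab => hEF hab) h.2⟩

lemma IsWalkFrom.exists_eq_cons (h : IsWalkFrom E u v l) : ∃ t, l = u :: t := by
  obtain ⟨⟨hne, -⟩, hu, -⟩ := h
  exact ⟨l.tail, by cases l <;> simp_all⟩

lemma IsWalkFrom.exists_eq_append_singleton (h : IsWalkFrom E u v l) : ∃ t, l = t ++ [v] :=
  ⟨l.dropLast, (List.dropLast_append_getLast? v h.2.2).symm⟩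

lemma IsWalkFrom.cut_loop {l₁ l₂ l₃ : List V}
    (h : IsWalkFrom E u v (l₁ ++ x :: (l₂ ++ x :: l₃))) :
    IsWalkFrom E u v (l₁ ++ x :: l₃) := by
  obtain ⟨h₁, h₂⟩ := isWalkFrom_append_cons_iff.1 h
  obtain ⟨-, h₃⟩ := (isWalkFrom_append_cons_iff (l₁ := x :: l₂)).1 h₂
  exact isWalkFrom_append_cons_iff.2 ⟨h₁, h₃⟩

def NonnegClosedWalks (E : Set (V × V)) (c : V → V → ℝ) : Prop :=
  ∀ l : List V, IsClosedWalk E l → 0 ≤ walkWeight c l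

namespace NonnegClosedWalks

lemma mono (hnn : NonnegClosedWalks E c) (hFE : F ⊆ E) : NonnegClosedWalks F c :=
  fun l hl => hnn l ⟨hl.1.mono hFE, hl.2⟩

lemma walkWeight_nonneg (hnn : NonnegClosedWalks E c) (h : IsWalkFrom E x x l) :
    0 ≤ walkWeight c l := by
  obtain ⟨t, rfl⟩ := h.exists_eq_cons
  cases t with
  | nil => simp
  | cons a t => exact hnn _ ⟨h.1, by simp, h.2.1.trans h.2.2.symm⟩

lemma walkWeight_cut_loop_le (hnn : NonnegClosedWalks E c) {l₁ l₂ l₃ : List V}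
    (h : IsWalkFrom E u v (l₁ ++ x :: (l₂ ++ x :: l₃))) :
    walkWeight c (l₁ ++ x :: l₃) ≤ walkWeight c (l₁ ++ x :: (l₂ ++ x :: l₃)) := by
  obtain ⟨-, h₂⟩ := isWalkFrom_append_cons_iff.1 h
  obtain ⟨hloop, -⟩ := (isWalkFrom_append_cons_iff (l₁ := x :: l₂)).1 h₂
  have hloop_nonneg := hnn.walkWeight_nonneg hloop
  have hsplit : walkWeight c (x :: (l₂ ++ x :: l₃)) =
      walkWeight c (x :: l₂ ++ [x]) + walkWeight c (x :: l₃) :=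
    walkWeight_append_cons c (x :: l₂) l₃ x
  rw [walkWeight_append_cons c l₁ l₃ x, walkWeight_append_cons c l₁ (l₂ ++ x :: l₃) x,
    hsplit]
  linarith

theorem exists_isPathFrom_le (hnn : NonnegClosedWalks E c) {l : List V}
    (h : IsWalkFrom E u v l) :
    ∃ p, IsPathFrom E u v p ∧ walkWeight c p ≤ walkWeight c l := by
  by_cases hnd : l.Nodup
  · exact ⟨l, ⟨h, hnd⟩, le_rfl⟩
  obtain ⟨l₁, x, l₂, l₃, rfl⟩ := List.exists_eq_append_cons_append_cons_of_not_nodup hnd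
  have : (l₁ ++ x :: l₃).length < (l₁ ++ x :: (l₂ ++ x :: l₃)).length := by simp
  obtain ⟨p, hp, hpw⟩ := exists_isPathFrom_le hnn h.cut_loop
  exact ⟨p, hp, hpw.trans (hnn.walkWeight_cut_loop_le h)⟩
termination_by l.length

lemma isWalkFrom_diff_singleton (hnn : NonnegClosedWalks E c) (h : IsWalkFrom E u v l)
    (hlt : walkWeight c l < c u v) : IsWalkFrom (E \ {(u, v)}) u v l := by
  refine ⟨⟨h.1.1, List.isChain_iff_forall_rel_of_append_cons_cons.2 ?_⟩, h.2⟩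
  rintro a b l₁ l₂ rfl
  refine ⟨List.isChain_iff_forall_rel_of_append_cons_cons.1 h.1.2 rfl, ?_⟩
  rintro ⟨⟩
  rw [isWalkFrom_append_cons_iff, isWalkFrom_cons_cons_iff] at h
  rw [walkWeight_append_cons, walkWeight_cons_cons] at hlt
  linarith [hnn.walkWeight_nonneg h.1, hnn.walkWeight_nonneg h.2.2.2]

end NonnegClosedWalks

def HasReplacementWalks (c : V → V → ℝ) (E F : Set (V × V)) : Prop :=
  ∀ a b, (a, b) ∈ E → ∃ m, IsWalkFrom F a b m ∧ walkWeight c m ≤ c a b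

namespace HasReplacementWalks

variable {G : Set (V × V)}

theorem exists_walk_le (hEF : HasReplacementWalks c E F) {u v : V} {l : List V}
    (h : IsWalkFrom E u v l) :
    ∃ m, IsWalkFrom F u v m ∧ walkWeight c m ≤ walkWeight c l :=
  match l, h with
  | [], h => absurd rfl h.1.1
  | [a], h => ⟨[a], isWalkFrom_singleton_iff.2 (isWalkFrom_singleton_iff.1 h), le_rfl⟩
  | a :: b :: r, h => by
    obtain ⟨rfl, hab, hbr⟩ := isWalkFrom_cons_cons_iff.1 h
    obtain ⟨m₁, hm₁, hm₁w⟩ := hEF a b hab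
    obtain ⟨m₂, hm₂, hm₂w⟩ := exists_walk_le hEF hbr
    obtain ⟨s, rfl⟩ := hm₁.exists_eq_append_singleton
    obtain ⟨t, rfl⟩ := hm₂.exists_eq_cons
    refine ⟨s ++ b :: t, isWalkFrom_append_cons_iff.2 ⟨hm₁, hm₂⟩, ?_⟩
    rw [walkWeight_append_cons, walkWeight_cons_cons]
    exact add_le_add hm₁w hm₂w

lemma trans (hEF : HasReplacementWalks c E F) (hFG : HasReplacementWalks c F G) :
    HasReplacementWalks c E G := fun a b hab =>
  let ⟨_, hm, hmw⟩ := hEF a b hab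
  let ⟨m', hm', hm'w⟩ := hFG.exists_walk_le hm
  ⟨m', hm', hm'w.trans hmw⟩

lemma mono_left (hEF : HasReplacementWalks c E F) (hGE : G ⊆ E) : HasReplacementWalks c G F :=
  fun a b hab => hEF a b (hGE hab)

end HasReplacementWalks

lemma hasReplacementWalks_diff {S : Set (V × V)} (hS : HasReplacementWalks c S (E \ S)) :
    HasReplacementWalks c E (E \ S) := by
  intro a b hab
  by_cases haS : (a, b) ∈ S
  · exact hS a b haS
  · exact ⟨[a, b], isWalkFrom_pair_iff.2 ⟨hab, haS⟩, by simp⟩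

lemma isRedundantEdgeSet_iff {R : Set (V × V)} (hnn : NonnegClosedWalks E c) :
    IsRedundantEdgeSet E c R ↔ R ⊆ E ∧ HasReplacementWalks c R (E \ R) := by
  refine and_congr_right fun _ => ⟨fun h a b hab => ?_, fun h e he => ?_⟩
  · obtain ⟨l, hl, hlw⟩ := h (a, b) hab
    exact ⟨l, hl.1, hlw⟩
  · obtain ⟨m, hm, hmw⟩ := h e.1 e.2 he
    obtain ⟨p, hp, hpw⟩ := (hnn.mono Set.sdiff_subset).exists_isPathFrom_le hm
    exact ⟨p, hp, hpw.trans hmw⟩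

end Walks

theorem stmt16 {V : Type*} (E : Set (V × V)) (c : V → V → ℝ)
    (hnn : ∀ l : List V, IsClosedWalk E l → 0 ≤ walkWeight c l)
    (R : Set (V × V)) (hR : IsRedundantEdgeSet E c R)
    (i j : V) (hij : (i, j) ∈ E) (dij : ℝ)
    (hd : IsMinWalkWeight E c i j dij) (hgt : dij < c i j) :
    IsRedundantEdgeSet E c (R ∪ {(i, j)}) := by
  have hnn : NonnegClosedWalks E c := hnn
  obtain ⟨hRE, hRrep⟩ := (isRedundantEdgeSet_iff hnn).1 hR
  have hE : HasReplacementWalks c E (E \ R) := hasReplacementWalks_diff hRrep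
  obtain ⟨⟨l, hl, rfl⟩, -⟩ := hd
  obtain ⟨W, hW, hWl⟩ := hE.exists_walk_le hl
  have hW' : IsWalkFrom ((E \ R) \ {(i, j)}) i j W :=
    (hnn.mono Set.sdiff_subset).isWalkFrom_diff_singleton hW (hWl.trans_lt hgt)
  have hER : HasReplacementWalks c (E \ R) (E \ (R ∪ {(i, j)})) := by
    rw [← Set.sdiff_sdiff]
    refine hasReplacementWalks_diff ?_
    rintro a b ⟨⟩
    exact ⟨W, hW', hWl.trans hgt.le⟩
  have hR'E : R ∪ {(i, j)} ⊆ E := Set.union_subset hRE (Set.singleton_subset_iff.2 hij)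
  exact (isRedundantEdgeSet_iff hnn).2 ⟨hR'E, (hE.trans hER).mono_left hR'E⟩
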